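/- Let $U$ and $Y$ be arbitrary sets, $p$ and $P$ positive integers, and let $w_1,\ldots,w_P : Y \to \mathbb{R}$ satisfy $w_j(y) \ge 0$ for all $j, y$ and $\sum_{j=1}^P w_j(y) = 1$ for all $y \in Y$. Let $G : U \to (Y \to \mathbb{R})$ be a target operator, $\beta : U \to \mathbb{R}^p$ a branch map, $\tau_1,\ldots,\tau_P : Y \to \mathbb{R}^p$ local trunk maps, $b_0 \in \mathbb{R}$ a bias, and $\epsilon > 0$. Suppose that for every $j \in \{1,\ldots,P\}$, every $u \in U$, and every $y \in Y$ with $w_j(y) \ne 0$, $\big| G(u)(y) - \langle \beta(u), \tau_j(y) \rangle - b_0 \big| \le \epsilon$, where $\langle \cdot,\cdot \rangle$ is the Euclidean inner product on $\mathbb{R}^p$. Then the PoU-MoE DeepONet $G^{\dagger}(u)(y) = \big\langle \beta(u), \sum_{j=1}^P w_j(y)\, \tau_j(y) \big\rangle + b_0$ satisfies $\big| G(u)(y) - G^{\dagger}(u)(y) \big| \le \epsilon$ for all $u \in U$ and all $y \in Y$. -/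
import Mathlib


/-- Universal approximation theorem for the PoU-MoE DeepONet: if each local expert trunk
`τ j` approximates the operator `G` to accuracy `ε` (together with the branch `β` and
bias `b₀`) on the support of its weight function `w j`, then the PoU-MoE DeepONet
`G†(u)(y) = ⟨β(u), ∑ j w j y • τ j y⟩ + b₀` approximates `G` to accuracy `ε` globally. -/
theorem pou_moe_deeponet_universal_approximation
    {U Y : Type*} (p P : ℕ) (hp : 0 < p) (hP : 0 < P)
    (w : Fin P → Y → ℝ)
    (hw_nonneg : ∀ j y, 0 ≤ w j y)
    (hw_sum : ∀ y, ∑ j, w j y = 1)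
    (G : U → Y → ℝ) (β : U → Fin p → ℝ) (τ : Fin P → Y → Fin p → ℝ)
    (b₀ : ℝ) (ε : ℝ) (hε : 0 < ε)
    (hloc : ∀ j u y, w j y ≠ 0 →
      |G u y - (∑ i, β u i * τ j y i) - b₀| ≤ ε) :
    ∀ u y,
      |G u y - ((∑ i, β u i * (∑ j, w j y * τ j y i)) + b₀)| ≤ ε := by
  intro u y
  have swap : (∑ i, β u i * (∑ j, w j y * τ j y i))
      = ∑ j, w j y * (∑ i, β u i * τ j y i) := by
    simp only [Finset.mul_sum]
    rw [Finset.sum_comm]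
    exact Finset.sum_congr rfl fun j _ => Finset.sum_congr rfl fun i _ => by ring
  have key : G u y - ((∑ i, β u i * (∑ j, w j y * τ j y i)) + b₀)
      = ∑ j, w j y * (G u y - (∑ i, β u i * τ j y i) - b₀) := by
    rw [swap]
    simp only [mul_sub, Finset.sum_sub_distrib, ← Finset.sum_mul, hw_sum y, one_mul]
    ring
  rw [key]
  calc |∑ j, w j y * (G u y - (∑ i, β u i * τ j y i) - b₀)|
      ≤ ∑ j, |w j y * (G u y - (∑ i, β u i * τ j y i) - b₀)| :=
        Finset.abs_sum_le_sum_abs _ _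
    _ ≤ ∑ j, w j y * ε := by
        apply Finset.sum_le_sum
        intro j _
        rw [abs_mul, abs_of_nonneg (hw_nonneg j y)]
        by_cases h : w j y = 0
        · simp [h]
        · exact mul_le_mul_of_nonneg_left (hloc j u y h) (hw_nonneg j y)
    _ = ε := by rw [← Finset.sum_mul, hw_sum, one_mul]
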